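/- Consider Algorithm 2 (Accelerated Projections 2): let M_1,...,M_k be closed linear subspaces of a real Hilbert space X, M := ⋂_{l=1}^k M_l, and x_0 ∈ M_1. For each i ≥ 0 choose l_i ∈ {2,...,k}, set x_i′ := P_{M_{l_i}}(x_i), x_i″ := P_{M_1}(x_i′), a_i := x_i − x_i″, and, when a_i ≠ 0, H_i := {x ∈ X : ⟨a_i, x⟩ = b_i} with b_i := ⟨a_i, x_i + (‖x_i − x_i′‖²/‖x_i − x_i″‖²)(x_i″ − x_i)⟩ (when a_i = 0 set H_i := X); then M_1 ∩ M_{l_i} ⊆ H_i and a_i ∈ M_1. Choose J_i ⊆ {0,1,...,i} with i ∈ J_i, set H̃_i := ⋂_{j∈J_i} H_j (a closed affine subspace containing M), and x_{i+1} := P_{H̃_i}(x_i). Suppose additionally: (A) there is an integer p̄ ≥ 0 such that for every l ∈ {2,...,k} and every i > 0 there is an integer p_i^l ∈ [0, p̄] with l_{i+p_i^l} = l (so that x′_{i+p_i^l} = P_{M_l}(x_{i+p_i^l})); and (B) for every i, x_0 − x_i lies in the linear span of {a_j : j ∈ J_i}. Then the sequence {x_i} converges strongly to P_M(x_0). -/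

import Mathlib

/-!
Inductively `x_i ∈ M₁`, so `⟪a_i, x_i⟫ = ‖x_i - x_i'‖²`, which forces `b_i = 0`: each `H_i` is the
hyperplane `a_iᗮ`, and `x_{i+1}` is the projection of `x_i` onto `S_iᗮ`, where
`S_i = span {a_j : j ∈ J_i} ⊆ Mᗮ`. For `z = P_M x_0` this gives
`‖x_i - z‖² = ‖x_i - x_{i+1}‖² + ‖x_{i+1} - z‖²`, so the steps tend to zero, and, with (B),
`‖x_{i+1} - z‖² = ⟪x_0 - z, x_{i+1} - z⟫`. Because `‖x_i - x_i'‖ ≤ ‖x_i - x_{i+1}‖`, condition (A)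
brings `x_n` close to every `M_l` within `p̄` steps, so `⟪v, x_n - z⟫ → 0` for `v ∈ M_lᗮ`. The
bounded sequence `x_n - z` is then weakly null against the closure of `∑ M_lᗮ`, which is `Mᗮ`
and contains `x_0 - z`; hence `‖x_{i+1} - z‖² → 0`.
-/

open Filter Topology Finset Submodule
open scoped RealInnerProductSpace NNReal

theorem mem_of_sub_succ_mem_span {R E : Type*} [Ring R] [AddCommGroup E] [Module R E]
    {K : Submodule R E} {x a : ℕ → E} {J : ℕ → Finset ℕ}
    (h0 : x 0 ∈ K) (hJ : ∀ i, ∀ j ∈ J i, j ≤ i) (ha : ∀ i, x i ∈ K → a i ∈ K)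
    (hstep : ∀ i, x i - x (i + 1) ∈ span R (a '' J i)) (i : ℕ) : x i ∈ K := by
  induction i using Nat.strong_induction_on with
  | _ i ih =>
    cases i with
    | zero => exact h0
    | succ n =>
      have hspan : span R (a '' J n) ≤ K := span_le.2 <| by
        rintro _ ⟨j, hj, rfl⟩
        exact ha j (ih j (Nat.lt_succ_of_le (hJ n j hj)))
      simpa using K.sub_mem (ih n n.lt_succ_self) (hspan (hstep n))

theorem tendsto_zero_of_sq_add_sq_succ_eq {s d : ℕ → ℝ}
    (h : ∀ n, s n ^ 2 + d (n + 1) ^ 2 = d n ^ 2) : Tendsto s atTop (𝓝 0) := by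
  have hanti : Antitone fun n => d n ^ 2 :=
    antitone_nat_of_succ_le fun n => by nlinarith [h n, sq_nonneg (s n)]
  have hlim := tendsto_atTop_ciInf hanti ⟨0, by rintro _ ⟨n, rfl⟩; positivity⟩
  have hsq : Tendsto (fun n => s n ^ 2) atTop (𝓝 0) := by
    simpa [fun n => eq_sub_of_add_eq (h n)] using hlim.sub (hlim.comp (tendsto_add_atTop_nat 1))
  rw [tendsto_zero_iff_abs_tendsto_zero]
  simpa [Function.comp_def, Real.sqrt_sq_eq_abs] using hsq.sqrt

theorem tendsto_sum_Ico_add {f : ℕ → ℝ} (hf : Tendsto f atTop (𝓝 0)) (m : ℕ) :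
    Tendsto (fun n => ∑ i ∈ Ico n (n + m), f i) atTop (𝓝 0) := by
  simpa [Finset.sum_Ico_eq_sum_range, add_comm] using
    tendsto_finsetSum (range m) fun q _ => hf.comp (tendsto_add_atTop_nat q)

section InnerProduct

variable {X : Type*} [NormedAddCommGroup X] [InnerProductSpace ℝ X]

theorem sub_mem_span_of_forall_norm_sub_le {ι : Type*} {a : ι → X} {b : ι → ℝ} {J : Finset ι}
    {u p : X} (hp : ∀ j ∈ J, ⟪a j, p⟫ = b j)
    (hmin : ∀ y, (∀ j ∈ J, ⟪a j, y⟫ = b j) → ‖u - p‖ ≤ ‖u - y‖) :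
    u - p ∈ span ℝ (a '' J) := by
  set S := span ℝ (a '' (J : Set ι))
  have : FiniteDimensional ℝ S := FiniteDimensional.span_of_finite ℝ (J.finite_toSet.image a)
  have hfeas : ∀ w ∈ Sᗮ, ∀ j ∈ J, ⟪a j, p + w⟫ = b j := fun w hw j hj => by
    have haj : a j ∈ S := subset_span ⟨j, hj, rfl⟩
    rw [inner_add_right, hp j hj, inner_right_of_mem_orthogonal haj hw, add_zero]
  have hinf : ‖(u - p) - 0‖ = ⨅ w : Sᗮ, ‖(u - p) - w‖ := by
    refine le_antisymm (le_ciInf fun w => ?_) ?_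
    · simpa [sub_sub] using hmin _ (hfeas w w.2)
    · simpa using ciInf_le (f := fun w : Sᗮ => ‖(u - p) - w‖)
        ⟨0, Set.forall_mem_range.2 fun w => norm_nonneg _⟩ 0
  rw [← S.orthogonal_orthogonal, mem_orthogonal']
  simpa using (Sᗮ.norm_eq_iInf_iff_real_inner_eq_zero (zero_mem _)).1 hinf

theorem le_norm_sub_of_inner_eq_sq {a y p : X} {r : ℝ} (ha : ‖a‖ ≤ r)
    (hy : ⟪a, y⟫ = r ^ 2) (hp : ⟪a, p⟫ = 0) : r ≤ ‖y - p‖ := by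
  have : r ^ 2 ≤ r * ‖y - p‖ := calc
    r ^ 2 = ⟪a, y - p⟫ := by rw [inner_sub_right, hy, hp, sub_zero]
    _ ≤ ‖a‖ * ‖y - p‖ := real_inner_le_norm _ _
    _ ≤ r * ‖y - p‖ := by gcongr
  nlinarith [norm_nonneg (y - p)]

section TwoProjections

variable (K N : Submodule ℝ X) [K.HasOrthogonalProjection] [N.HasOrthogonalProjection] {y : X}

theorem sub_starProjection_starProjection_mem_orthogonal_inf :
    y - K.starProjection (N.starProjection y) ∈ (K ⊓ N)ᗮ := by
  simpa using add_mem (orthogonal_le inf_le_right (N.sub_starProjection_mem_orthogonal y))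
    (orthogonal_le inf_le_left (K.sub_starProjection_mem_orthogonal (N.starProjection y)))

theorem inner_sub_starProjection_starProjection_self (hy : y ∈ K) :
    ⟪y - K.starProjection (N.starProjection y), y⟫ = ‖y - N.starProjection y‖ ^ 2 := by
  set y' := N.starProjection y
  have h1 : ⟪y' - K.starProjection y', y⟫ = 0 := K.starProjection_inner_eq_zero y' y hy
  have h2 : ⟪y - y', y'⟫ = 0 := N.starProjection_inner_eq_zero y y' (N.starProjection_apply_mem y)
  calc ⟪y - K.starProjection y', y⟫
      = ⟪y - y', y - y'⟫ + ⟪y - y', y'⟫ + ⟪y' - K.starProjection y', y⟫ := by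
        rw [← inner_add_right, sub_add_cancel, ← inner_add_left, sub_add_sub_cancel]
    _ = ‖y - y'‖ ^ 2 := by rw [h1, h2, real_inner_self_eq_norm_sq]; ring

theorem norm_sub_starProjection_starProjection_le (hy : y ∈ K) :
    ‖y - K.starProjection (N.starProjection y)‖ ≤ ‖y - N.starProjection y‖ := by
  calc ‖y - K.starProjection (N.starProjection y)‖
      = ‖K.starProjection (y - N.starProjection y)‖ := by
        rw [map_sub, K.starProjection_eq_self_iff.2 hy]
    _ ≤ _ := K.norm_starProjection_apply_le _

theorem inner_sub_starProjection_starProjection_add_smul_eq_zero (hy : y ∈ K) :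
    ⟪y - K.starProjection (N.starProjection y),
      y + (‖y - N.starProjection y‖ ^ 2 / ‖y - K.starProjection (N.starProjection y)‖ ^ 2) •
        (K.starProjection (N.starProjection y) - y)⟫ = 0 := by
  rw [← inner_sub_starProjection_starProjection_self K N hy]
  set a := y - K.starProjection (N.starProjection y)
  have : y + (⟪a, y⟫ / ‖a‖ ^ 2) • (K.starProjection (N.starProjection y) - y)
      = y - (ℝ ∙ a).starProjection y := by
    rw [starProjection_singleton, ← neg_sub, smul_neg, ← sub_eq_add_neg]; rfl
  rw [this]
  exact inner_right_of_mem_orthogonal (mem_span_singleton_self a)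
    ((ℝ ∙ a).sub_starProjection_mem_orthogonal y)

end TwoProjections

def weakNullSubmodule (y : ℕ → X) : Submodule ℝ X where
  carrier := {u | Tendsto (fun n => ⟪u, y n⟫) atTop (𝓝 0)}
  zero_mem' := by simp
  add_mem' hu hv := by simpa [inner_add_left] using hu.add hv
  smul_mem' c u hu := by simpa [real_inner_smul_left] using hu.const_mul c

@[simp]
theorem mem_weakNullSubmodule {y : ℕ → X} {u : X} :
    u ∈ weakNullSubmodule y ↔ Tendsto (fun n => ⟪u, y n⟫) atTop (𝓝 0) :=
  Iff.rfl

theorem isClosed_weakNullSubmodule {y : ℕ → X} {C : ℝ≥0} (hy : ∀ n, ‖y n‖ ≤ C) :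
    IsClosed (weakNullSubmodule y : Set X) := by
  have hlip : ∀ n, LipschitzWith C fun u => ⟪u, y n⟫ := fun n =>
    LipschitzWith.of_dist_le_mul fun u v => by
      rw [Real.dist_eq, ← inner_sub_left, dist_eq_norm, mul_comm]
      exact (abs_real_inner_le_norm _ _).trans (by gcongr; exact hy n)
  exact ((LipschitzWith.uniformEquicontinuous _ C hlip).equicontinuous).isClosed_setOfPred_tendsto
    continuous_const

theorem orthogonal_iInf_eq_topologicalClosure_iSup [CompleteSpace X] {ι : Type*}
    (K : ι → Submodule ℝ X) [∀ i, (K i).HasOrthogonalProjection] :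
    (⨅ i, K i)ᗮ = (⨆ i, (K i)ᗮ).topologicalClosure := by
  rw [← orthogonal_orthogonal_eq_closure, ← iInf_orthogonal]
  simp_rw [orthogonal_orthogonal]

theorem orthogonal_iInf_le_weakNullSubmodule [CompleteSpace X] {ι : Type*}
    (M : ι → Submodule ℝ X) [∀ m, (M m).HasOrthogonalProjection] {y : ℕ → X} {C : ℝ≥0}
    (hy : ∀ n, ‖y n‖ ≤ C) (h : ∀ m, ∀ v ∈ (M m)ᗮ, Tendsto (fun n => ⟪v, y n⟫) atTop (𝓝 0)) :
    (⨅ m, M m)ᗮ ≤ weakNullSubmodule y := by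
  rw [orthogonal_iInf_eq_topologicalClosure_iSup]
  exact topologicalClosure_minimal _ (iSup_le h) (isClosed_weakNullSubmodule hy)

theorem tendsto_inner_of_forall_exists_near {N : Submodule ℝ X} {x : ℕ → X} {pbar : ℕ}
    (hs : Tendsto (fun n => ‖x n - x (n + 1)‖) atTop (𝓝 0))
    (hnear : ∀ n, 0 < n → ∃ p ≤ pbar, ∃ y ∈ N, ‖x (n + p) - y‖ ≤ ‖x (n + p) - x (n + p + 1)‖)
    {v : X} (hv : v ∈ Nᗮ) : Tendsto (fun n => ⟪v, x n⟫) atTop (𝓝 0) := by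
  refine squeeze_zero_norm' ?_ (by simpa using (tendsto_sum_Ico_add hs (pbar + 1)).const_mul ‖v‖)
  filter_upwards [eventually_gt_atTop 0] with n hn
  obtain ⟨p, hp, y, hy, hxy⟩ := hnear n hn
  have hdist : ‖x n - y‖ ≤ ∑ i ∈ Ico n (n + (pbar + 1)), ‖x i - x (i + 1)‖ := calc
    ‖x n - y‖ ≤ ‖x n - x (n + p)‖ + ‖x (n + p) - y‖ := norm_sub_le_norm_sub_add_norm_sub _ _ _
    _ ≤ ∑ i ∈ Ico n (n + p), ‖x i - x (i + 1)‖ + ‖x (n + p) - x (n + p + 1)‖ := by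
        gcongr
        simpa [dist_eq_norm] using dist_le_Ico_sum_dist x (n.le_add_right p)
    _ = ∑ i ∈ Ico n (n + p + 1), ‖x i - x (i + 1)‖ := (sum_Ico_succ_top (by omega) _).symm
    _ ≤ _ := sum_le_sum_of_subset_of_nonneg (Ico_subset_Ico_right (by omega))
        fun _ _ _ => norm_nonneg _
  calc ‖⟪v, x n⟫‖ = ‖⟪v, x n - y⟫‖ := by
        rw [inner_sub_right, inner_left_of_mem_orthogonal hy hv, sub_zero]
    _ ≤ ‖v‖ * ‖x n - y‖ := norm_inner_le_norm _ _
    _ ≤ _ := by gcongr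

theorem tendsto_starProjection_iInf_of_sub_succ_mem [CompleteSpace X] {ι : Type*}
    (M : ι → Submodule ℝ X) [∀ m, (M m).HasOrthogonalProjection]
    [(⨅ m, M m).HasOrthogonalProjection] {x : ℕ → X} {S : ℕ → Submodule ℝ X} (pbar : ℕ)
    (hSM : ∀ i, S i ≤ (⨅ m, M m)ᗮ) (hsub : ∀ i, x i - x (i + 1) ∈ S i)
    (hperp : ∀ i, x (i + 1) ∈ (S i)ᗮ) (hS0 : ∀ i, x 0 - x i ∈ S i)
    (hnear : ∀ m, ∀ n, 0 < n → ∃ p ≤ pbar, ∃ y ∈ M m,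
      ‖x (n + p) - y‖ ≤ ‖x (n + p) - x (n + p + 1)‖) :
    Tendsto x atTop (𝓝 ((⨅ m, M m).starProjection (x 0))) := by
  set z := (⨅ m, M m).starProjection (x 0)
  have hzM : z ∈ ⨅ m, M m := starProjection_apply_mem _ _
  have hperpz i : x (i + 1) - z ∈ (S i)ᗮ :=
    sub_mem (hperp i) (orthogonal_le (hSM i) (le_orthogonal_orthogonal _ hzM))
  have hpyth i : ‖x i - x (i + 1)‖ ^ 2 + ‖x (i + 1) - z‖ ^ 2 = ‖x i - z‖ ^ 2 := by
    rw [← sub_add_sub_cancel (x i) (x (i + 1)) z, norm_add_sq_real,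
      inner_right_of_mem_orthogonal (hsub i) (hperpz i)]
    ring
  have hbound : ∀ n, ‖x n - z‖ ≤ ‖x 0 - z‖ := by
    refine fun n => antitone_nat_of_succ_le (f := fun n => ‖x n - z‖) (fun i => ?_) n.zero_le
    nlinarith [hpyth i, norm_nonneg (x i - z), norm_nonneg (x (i + 1) - z)]
  have hweak : x 0 - z ∈ weakNullSubmodule (fun n => x n - z) := by
    refine orthogonal_iInf_le_weakNullSubmodule M (C := ‖x 0 - z‖₊) hbound (fun m v hv => ?_)
      (sub_starProjection_mem_orthogonal _)
    simpa [inner_sub_right, inner_left_of_mem_orthogonal ((mem_iInf _).1 hzM m) hv] using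
      tendsto_inner_of_forall_exists_near
        (tendsto_zero_of_sq_add_sq_succ_eq (d := fun n => ‖x n - z‖) hpyth) (hnear m) hv
  have hsq n : ‖x (n + 1) - z‖ ^ 2 = ⟪x 0 - z, x (n + 1) - z⟫ := by
    have h0 : x 0 - x (n + 1) ∈ S n := by simpa using add_mem (hS0 n) (hsub n)
    rw [← sub_add_sub_cancel (x 0) (x (n + 1)) z, inner_add_left,
      inner_right_of_mem_orthogonal h0 (hperpz n), real_inner_self_eq_norm_sq, zero_add]
  rw [tendsto_iff_norm_sub_tendsto_zero, ← tendsto_add_atTop_iff_nat 1]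
  have hsq' := (mem_weakNullSubmodule.1 hweak |>.comp (tendsto_add_atTop_nat 1)).congr
    fun n => (hsq n).symm
  simpa [Real.sqrt_sq (norm_nonneg _)] using hsq'.sqrt

end InnerProduct

-- The paper's `M₁` is `M 0`.
theorem algorithm2_strong_convergence_general
    {X : Type*} [NormedAddCommGroup X] [InnerProductSpace ℝ X] [CompleteSpace X]
    {k : ℕ} (M : Fin (k + 1) → Submodule ℝ X) [∀ l, CompleteSpace (M l)]
    [CompleteSpace (⨅ l, M l : Submodule ℝ X)]
    (l : ℕ → Fin (k + 1))
    (x x' x'' a : ℕ → X) (b : ℕ → ℝ) (J : ℕ → Finset ℕ)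
    (hx0 : x 0 ∈ M 0)
    (hx' : ∀ i, x' i = (Submodule.orthogonalProjectionOnto (M (l i)) (x i) : X))
    (hx'' : ∀ i, x'' i = (Submodule.orthogonalProjectionOnto (M 0) (x' i) : X))
    (ha : ∀ i, a i = x i - x'' i)
    (hb : ∀ i, b i =
      ⟪a i, x i + (‖x i - x' i‖ ^ 2 / ‖x i - x'' i‖ ^ 2) • (x'' i - x i)⟫)
    (hJ : ∀ i, i ∈ J i ∧ ∀ j ∈ J i, j ≤ i)
    -- `x_{i+1}` is the nearest-point projection of `x_i` onto the closed
    -- affine subspace `H̃_i = ⋂_{j ∈ J_i} {y : ⟪a_j, y⟫ = b_j}`: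
    (hstep : ∀ i,
      (∀ j ∈ J i, ⟪a j, x (i + 1)⟫ = b j) ∧
      ∀ y : X, (∀ j ∈ J i, ⟪a j, y⟫ = b j) → ‖x i - x (i + 1)‖ ≤ ‖x i - y‖)
    -- condition (A):
    (hA : ∃ pbar : ℕ, ∀ lidx : Fin (k + 1), lidx ≠ 0 → ∀ i, 0 < i →
      ∃ p ≤ pbar, l (i + p) = lidx)
    -- condition (B):
    (hB : ∀ i, x 0 - x i ∈ Submodule.span ℝ (a '' (J i : Set ℕ))) :
    Tendsto x atTop
      (nhds (Submodule.orthogonalProjectionOnto (⨅ l, M l : Submodule ℝ X) (x 0) : X)) := by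
  obtain ⟨pbar, hA⟩ := hA
  simp only [coe_orthogonalProjectionOnto_apply] at hx' hx'' ⊢
  obtain rfl := funext hx''
  obtain rfl := funext hx'
  have hsub i : x i - x (i + 1) ∈ span ℝ (a '' J i) :=
    sub_mem_span_of_forall_norm_sub_le (hstep i).1 (hstep i).2
  have hM0 : ∀ i, x i ∈ M 0 := mem_of_sub_succ_mem_span hx0 (fun i => (hJ i).2)
    (fun i hi => ha i ▸ sub_mem hi (starProjection_apply_mem _ _)) hsub
  have hb0 i : b i = 0 := by
    rw [hb i, ha i]
    exact inner_sub_starProjection_starProjection_add_smul_eq_zero _ _ (hM0 i)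
  have hnear i : ‖x i - (M (l i)).starProjection (x i)‖ ≤ ‖x i - x (i + 1)‖ :=
    le_norm_sub_of_inner_eq_sq (ha i ▸ norm_sub_starProjection_starProjection_le _ _ (hM0 i))
      (ha i ▸ inner_sub_starProjection_starProjection_self _ _ (hM0 i))
      (by rw [(hstep i).1 i (hJ i).1, hb0])
  refine tendsto_starProjection_iInf_of_sub_succ_mem M pbar (fun i => span_le.2 ?_) hsub
    (fun i => (isOrtho_span.2 ?_).symm (mem_span_singleton_self _)) hB fun m n hn => ?_
  · rintro _ ⟨j, -, rfl⟩
    exact ha j ▸ orthogonal_le (le_inf (iInf_le _ 0) (iInf_le _ (l j)))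
      (sub_starProjection_starProjection_mem_orthogonal_inf _ _)
  · rintro _ ⟨j, hj, rfl⟩ _ rfl
    rw [(hstep i).1 j hj, hb0]
  · by_cases hm : m = 0
    · subst hm
      exact ⟨0, pbar.zero_le, x n, hM0 n, by simp⟩
    · obtain ⟨p, hp, hlp⟩ := hA m hm n hn
      exact ⟨p, hp, _, hlp ▸ starProjection_apply_mem _ _, hnear _⟩

/-- Strong convergence of Algorithm 2: in Algorithm 2, with
`M 0` playing the role of `M₁` (the subspace that is easy to project onto),
`x_0 ∈ M 0`, `l_i ≠ 0` (i.e. `l_i ∈ {2,…,k}`), `x'_i = P_{M_{l_i}} x_i`,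
`x''_i = P_{M 0} x'_i`, `a_i = x_i - x''_i`,
`b_i = ⟪a_i, x_i + (‖x_i - x'_i‖²/‖x_i - x''_i‖²)(x''_i - x_i)⟫`,
`H_i = {x : ⟪a_i, x⟫ = b_i}` (which is all of `X` when `a_i = 0`),
`i ∈ J_i ⊆ {0,…,i}`, `H̃_i = ⋂_{j ∈ J_i} H_j`, and `x_{i+1} = P_{H̃_i}(x_i)`
(the nearest point of `H̃_i` to `x_i`), assume (A) there is `p̄` such that for
every `l ≠ 0` and every `i > 0` there is `p_i^l ∈ [0, p̄]` with
`l_{i+p_i^l} = l`, and (B) `x_0 - x_i` lies in the span of `{a_j : j ∈ J_i}`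
for every `i`.  Then `x_i → P_M(x_0)` strongly, where `M = ⨅ l, M l`. -/
theorem algorithm2_strong_convergence
    {X : Type*} [NormedAddCommGroup X] [InnerProductSpace ℝ X] [CompleteSpace X]
    {k : ℕ} (M : Fin (k + 1) → Submodule ℝ X) [∀ l, CompleteSpace (M l)]
    [CompleteSpace (⨅ l, M l : Submodule ℝ X)]
    (l : ℕ → Fin (k + 1)) (hl : ∀ i, l i ≠ 0)
    (x x' x'' a : ℕ → X) (b : ℕ → ℝ) (J : ℕ → Finset ℕ)
    (hx0 : x 0 ∈ M 0)
    (hx' : ∀ i, x' i = (Submodule.orthogonalProjectionOnto (M (l i)) (x i) : X))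
    (hx'' : ∀ i, x'' i = (Submodule.orthogonalProjectionOnto (M 0) (x' i) : X))
    (ha : ∀ i, a i = x i - x'' i)
    (hb : ∀ i, b i =
      ⟪a i, x i + (‖x i - x' i‖ ^ 2 / ‖x i - x'' i‖ ^ 2) • (x'' i - x i)⟫)
    (hJ : ∀ i, i ∈ J i ∧ ∀ j ∈ J i, j ≤ i)
    -- `x_{i+1}` is the nearest-point projection of `x_i` onto the closed
    -- affine subspace `H̃_i = ⋂_{j ∈ J_i} {y : ⟪a_j, y⟫ = b_j}`:
    (hstep : ∀ i,
      (∀ j ∈ J i, ⟪a j, x (i + 1)⟫ = b j) ∧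
      ∀ y : X, (∀ j ∈ J i, ⟪a j, y⟫ = b j) → ‖x i - x (i + 1)‖ ≤ ‖x i - y‖)
    -- condition (A):
    (hA : ∃ pbar : ℕ, ∀ lidx : Fin (k + 1), lidx ≠ 0 → ∀ i, 0 < i →
      ∃ p ≤ pbar, l (i + p) = lidx)
    -- condition (B):
    (hB : ∀ i, x 0 - x i ∈ Submodule.span ℝ (a '' (J i : Set ℕ))) :
    Tendsto x atTop
      (nhds (Submodule.orthogonalProjectionOnto (⨅ l, M l : Submodule ℝ X) (x 0) : X)) :=
  algorithm2_strong_convergence_general M l x x' x'' a b J hx0 hx' hx'' ha hb hJ hstep hA hB
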